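/- Let z : [0,1] → ℝ be measurable with ∫₀¹ z(y)² dy < ∞ and ‖z‖_{L²} := (∫₀¹ z(y)² dy)^{1/2} ≤ 1/(√2·e). Then ( ∫₀¹ z(y)²·( log₊(1/|z(y)|) )² dy )^{1/2} ≤ 2·‖z‖_{L²} + 2·‖z‖_{L²}·log₊( 1/‖z‖_{L²} ). -/
import Mathlib
open MeasureTheory

noncomputable def logPlus (u : ℝ) : ℝ := Real.log (max 1 u)

lemma logPlus_nonneg (u : ℝ) : 0 ≤ logPlus u :=
  Real.log_nonneg (le_max_left 1 u)

lemma logPlus_mono {u v : ℝ} (h : u ≤ v) : logPlus u ≤ logPlus v :=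
  Real.log_le_log (lt_of_lt_of_le one_pos (le_max_left 1 u)) (max_le_max le_rfl h)

lemma logPlus_of_one_le {u : ℝ} (h : 1 ≤ u) : logPlus u = Real.log u := by
  rw [logPlus, max_eq_right h]

lemma logPlus_measurable : Measurable logPlus :=
  Real.measurable_log.comp (measurable_const.max measurable_id)

/-- monotonicity of t ↦ t·log(1/t) on (0, 1/e] -/
lemma mul_log_inv_mono {a b : ℝ} (ha : 0 < a) (hab : a ≤ b) (hb : b ≤ (Real.exp 1)⁻¹) :
    a * Real.log (1/a) ≤ b * Real.log (1/b) := by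
  have hb0 : 0 < b := lt_of_lt_of_le ha hab
  have h1 : Real.log (b/a) ≤ b/a - 1 := Real.log_le_sub_one_of_pos (by positivity)
  have h2 : (1:ℝ) ≤ Real.log (1/b) := by
    rw [Real.le_log_iff_exp_le (by positivity), le_div_iff₀ hb0]
    calc Real.exp 1 * b ≤ Real.exp 1 * (Real.exp 1)⁻¹ := by
          exact mul_le_mul_of_nonneg_left hb (Real.exp_pos 1).le
    _ = 1 := mul_inv_cancel₀ (Real.exp_pos 1).ne'
  have h3 : Real.log (1/a) = Real.log (b/a) + Real.log (1/b) := by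
    rw [← Real.log_mul (by positivity) (by positivity)]
    congr 1
    field_simp
  have e1 : a * Real.log (b/a) ≤ b - a := by
    calc a * Real.log (b/a) ≤ a * (b/a - 1) := mul_le_mul_of_nonneg_left h1 ha.le
    _ = b - a := by field_simp
  have e2 : (b - a) * 1 ≤ (b - a) * Real.log (1/b) :=
    mul_le_mul_of_nonneg_left h2 (sub_nonneg.mpr hab)
  rw [h3, mul_add]
  nlinarith

lemma key_pointwise {N : ℝ} (hN : 0 < N) (hN2 : N^2 ≤ (Real.exp 1)⁻¹) {t : ℝ} (ht : 0 ≤ t) :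
    t^2 * (logPlus (1/t))^2 ≤ 4*N^4*(logPlus (1/N))^2 + 4*t^2*(logPlus (1/N))^2 := by
  have hexp : (Real.exp 1)⁻¹ ≤ 1 := by
    rw [inv_le_one_iff₀]; right; exact Real.one_le_exp one_pos.le
  have hN1 : N ≤ 1 := by nlinarith
  set L := logPlus (1/N) with hL
  have hLnn : 0 ≤ L := logPlus_nonneg _
  have hLeq : L = Real.log (1/N) := logPlus_of_one_le (by rw [le_div_iff₀ hN]; linarith)
  have hN2le1 : N^2 ≤ 1 := le_trans hN2 hexp
  have hinvN2 : (1:ℝ) ≤ 1/N^2 := by rw [le_div_iff₀ (by positivity)]; linarith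
  have h2L : logPlus (1/N^2) = 2 * L := by
    rw [logPlus_of_one_le hinvN2, hLeq, show (1:ℝ)/N^2 = (1/N)^2 by ring, Real.log_pow]
    push_cast; ring
  rcases eq_or_lt_of_le ht with h0 | ht0
  · rw [← h0]; simp; positivity
  rcases le_or_gt (N^2) t with hc | hc
  · -- big t : logPlus (1/t) ≤ 2L
    have hb : logPlus (1/t) ≤ 2 * L := by
      rw [← h2L]
      exact logPlus_mono (by apply div_le_div_of_nonneg_left one_pos.le (by positivity) hc)
    have hb0 : 0 ≤ logPlus (1/t) := logPlus_nonneg _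
    nlinarith [sq_nonneg t, sq_nonneg (N^2*L), mul_le_mul hb hb hb0 (by positivity)]
  · -- small t : use monotonicity of t log (1/t)
    have ht1 : t < 1 := lt_of_lt_of_le hc hN2le1
    have hlt : logPlus (1/t) = Real.log (1/t) :=
      logPlus_of_one_le (by rw [le_div_iff₀ ht0]; linarith)
    have hmono := mul_log_inv_mono ht0 hc.le hN2
    have hlogN2 : Real.log (1/N^2) = 2 * L := by rw [← h2L, logPlus_of_one_le hinvN2]
    rw [hlogN2] at hmono
    have hltnn : 0 ≤ Real.log (1/t) := Real.log_nonneg (by rw [le_div_iff₀ ht0]; linarith)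
    have hsq : (t * Real.log (1/t))^2 ≤ (N^2 * (2*L))^2 := by
      apply pow_le_pow_left₀ (by positivity) hmono
    rw [hlt]
    nlinarith [sq_nonneg (t*L)]

lemma sqrt_add_le' (x y : ℝ) (hx : 0 ≤ x) (hy : 0 ≤ y) :
    Real.sqrt (x + y) ≤ Real.sqrt x + Real.sqrt y := by
  have h : Real.sqrt (x + y) ≤ Real.sqrt ((Real.sqrt x + Real.sqrt y)^2) :=
    Real.sqrt_le_sqrt (by nlinarith [Real.sq_sqrt hx, Real.sq_sqrt hy, Real.sqrt_nonneg x, Real.sqrt_nonneg y])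
  rwa [Real.sqrt_sq (by positivity)] at h

theorem stmt_14 (z : ℝ → ℝ) (hz : Measurable z)
    (hzint : IntervalIntegrable (fun y => z y ^ 2) volume 0 1)
    (hznorm : Real.sqrt (∫ y in (0:ℝ)..1, z y ^ 2) ≤ 1 / (Real.sqrt 2 * Real.exp 1)) :
    Real.sqrt (∫ y in (0:ℝ)..1, z y ^ 2 * (logPlus (1 / |z y|)) ^ 2)
      ≤ 2 * Real.sqrt (∫ y in (0:ℝ)..1, z y ^ 2)
        + 2 * Real.sqrt (∫ y in (0:ℝ)..1, z y ^ 2) *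
            logPlus (1 / Real.sqrt (∫ y in (0:ℝ)..1, z y ^ 2)) := by
  have hInn : 0 ≤ ∫ y in (0:ℝ)..1, z y ^ 2 :=
    intervalIntegral.integral_nonneg (by norm_num) (fun x _ => sq_nonneg _)
  set I := ∫ y in (0:ℝ)..1, z y ^ 2 with hIdef
  set N := Real.sqrt I with hNdef
  have hNnn : 0 ≤ N := Real.sqrt_nonneg _
  have hIN : I = N^2 := (Real.sq_sqrt hInn).symm
  have hmeas : Measurable (fun y => z y ^ 2 * (logPlus (1 / |z y|)) ^ 2) := by
    apply (hz.pow_const 2).mul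
    exact (logPlus_measurable.comp (measurable_const.div hz.abs)).pow_const 2
  rcases eq_or_lt_of_le hNnn with hN0 | hNpos
  · -- N = 0 : everything is zero
    have hI0 : I = 0 := by rw [hIN, ← hN0]; ring
    have hz0 : (fun y => z y ^ 2) =ᵐ[volume.restrict (Set.Ioc 0 1)] 0 :=
      (intervalIntegral.integral_eq_zero_iff_of_le_of_nonneg_ae (by norm_num)
        (Filter.Eventually.of_forall (fun x => sq_nonneg _)) hzint).mp hI0
    have hbig0 : ∫ y in (0:ℝ)..1, z y ^ 2 * (logPlus (1 / |z y|)) ^ 2 = 0 := by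
      rw [intervalIntegral.integral_of_le (by norm_num : (0:ℝ) ≤ 1)]
      apply integral_eq_zero_of_ae
      filter_upwards [hz0] with y hy
      have : z y ^ 2 = 0 := hy
      simp [pow_eq_zero_iff] at this
      simp [this]
    rw [hbig0, Real.sqrt_zero, ← hN0]
    norm_num
  · -- main case N > 0
    have he2 : (2:ℝ) ≤ Real.exp 1 := by
      have := Real.add_one_le_exp 1; linarith
    have hN2 : N^2 ≤ (Real.exp 1)⁻¹ := by
      have h1 : N^2 ≤ (1 / (Real.sqrt 2 * Real.exp 1))^2 :=
        pow_le_pow_left₀ hNnn hznorm 2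
      have h2 : (1 / (Real.sqrt 2 * Real.exp 1))^2 = 1/(2 * Real.exp 1 ^ 2) := by
        rw [div_pow, mul_pow, Real.sq_sqrt two_pos.le, one_pow]
      rw [h2] at h1
      have h3 : N^2 * (2 * Real.exp 1 ^ 2) ≤ 1 := by
        rw [le_div_iff₀ (by positivity)] at h1; linarith
      rw [inv_eq_one_div, le_div_iff₀ (Real.exp_pos 1)]
      nlinarith [sq_nonneg N, Real.exp_pos 1]
    have hexp1 : (Real.exp 1)⁻¹ ≤ 1 := by
      rw [inv_le_one_iff₀]; right; exact Real.one_le_exp one_pos.le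
    have hN1 : N ≤ 1 := by nlinarith
    set L := logPlus (1/N) with hLdef
    have hLnn : 0 ≤ L := logPlus_nonneg _
    have hLeq : L = Real.log (1/N) := logPlus_of_one_le (by rw [le_div_iff₀ hNpos]; linarith)
    -- pointwise bound
    have hbd : ∀ y, z y ^ 2 * (logPlus (1 / |z y|)) ^ 2 ≤ 4*N^4*L^2 + 4*L^2 * z y ^ 2 := by
      intro y
      have := key_pointwise hNpos hN2 (abs_nonneg (z y))
      rw [sq_abs] at this
      linarith
    set g : ℝ → ℝ := fun y => 4*N^4*L^2 + 4*L^2 * z y ^ 2 with hgdef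
    have hgint : IntervalIntegrable g volume 0 1 :=
      intervalIntegrable_const.add (hzint.const_mul (4*L^2))
    have hbigint : IntervalIntegrable
        (fun y => z y ^ 2 * (logPlus (1 / |z y|)) ^ 2) volume 0 1 := by
      apply hgint.mono_fun' (hmeas.aestronglyMeasurable.restrict)
      apply Filter.Eventually.of_forall
      intro y
      have h0 : 0 ≤ z y ^ 2 * (logPlus (1 / |z y|)) ^ 2 := by positivity
      simpa [Real.norm_eq_abs, abs_of_nonneg h0] using hbd y
    have hIle : ∫ y in (0:ℝ)..1, z y ^ 2 * (logPlus (1 / |z y|)) ^ 2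
        ≤ 4*N^4*L^2 + 4*L^2 * N^2 := by
      have h1 : ∫ y in (0:ℝ)..1, z y ^ 2 * (logPlus (1 / |z y|)) ^ 2
          ≤ ∫ y in (0:ℝ)..1, g y :=
        intervalIntegral.integral_mono_on (by norm_num) hbigint hgint (fun y _ => hbd y)
      have h2 : ∫ y in (0:ℝ)..1, g y = 4*N^4*L^2 + 4*L^2 * I := by
        rw [hgdef]
        rw [intervalIntegral.integral_add intervalIntegrable_const (hzint.const_mul (4*L^2)),
          intervalIntegral.integral_const, intervalIntegral.integral_const_mul]
        simp [← hIdef]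
      rw [h2, hIN] at h1
      exact h1
    -- N * L ≤ 1
    have hNL : N * L ≤ 1 := by
      have hlog : L ≤ 1/N - 1 := by
        rw [hLeq]; exact Real.log_le_sub_one_of_pos (by positivity)
      have : N * L ≤ N * (1/N - 1) := mul_le_mul_of_nonneg_left hlog hNnn
      have heq : N * (1/N - 1) = 1 - N := by field_simp
      linarith [heq ▸ this]
    calc Real.sqrt (∫ y in (0:ℝ)..1, z y ^ 2 * (logPlus (1 / |z y|)) ^ 2)
        ≤ Real.sqrt (4*N^4*L^2 + 4*L^2 * N^2) := Real.sqrt_le_sqrt hIle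
      _ ≤ Real.sqrt (4*N^4*L^2) + Real.sqrt (4*L^2 * N^2) :=
          sqrt_add_le' _ _ (by positivity) (by positivity)
      _ = 2*N^2*L + 2*N*L := by
          rw [show 4*N^4*L^2 = (2*N^2*L)^2 by ring, show 4*L^2*N^2 = (2*N*L)^2 by ring,
            Real.sqrt_sq (by positivity), Real.sqrt_sq (by positivity)]
      _ ≤ 2*N + 2*N*L := by nlinarith
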